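/- arXiv:2310.13534 — 2 statements merged into one kernel-verified Lean document; each statement's English description precedes it below -/
import Mathlib

section
/- Let λ_0, …, λ_n be complex numbers with Re(λ_k) > −1/2 for all k (repetitions allowed), and let λ ∈ ℂ satisfy Re(λ + λ_k) > −1 for all k = 0, …, n. Then ∫_0^1 L_n(x) x^λ dx = −W_n(−λ−1) = (∏_{k=0}^{n−1} (λ − conj(λ_k))/(1 + λ + λ_k)) · 1/(1 + λ + λ_n). -/
open MeasureTheory Complex

noncomputable def muntzW (lam : ℕ → ℂ) (n : ℕ) (t : ℂ) : ℂ :=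
  (∏ k ∈ Finset.range n, (t + (starRingEnd ℂ) (lam k) + 1) / (t - lam k)) * (1 / (t - lam n))

/-- The Müntz–Legendre polynomial `L_n(x) = (1/(2πi)) ∮_{|t|=R} W_n(t) x^t dt`,
with the radius `R = 1 + ∑_{k ≤ n} |λ_k| > max_k |λ_k|`. -/
noncomputable def muntzLegendre (lam : ℕ → ℂ) (n : ℕ) (x : ℝ) : ℂ :=
  (2 * Real.pi * Complex.I)⁻¹ *
    ∮ t in C(0, 1 + ∑ k ∈ Finset.range (n + 1), ‖lam k‖),
      muntzW lam n t * Complex.exp (t * Real.log x)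

open Metric Filter Set

namespace MuntzAux

/-- Iterated divided difference via `dslope`. -/
noncomputable def dd : (ℂ → ℂ) → (ℕ → ℂ) → ℕ → ℂ
  | g, μ, 0 => g (μ 0)
  | g, μ, n + 1 => dd (dslope g (μ 0)) (fun k => μ (k + 1)) n

lemma Differentiable.dslope' {g : ℂ → ℂ} (hg : Differentiable ℂ g) (a : ℂ) :
    Differentiable ℂ (dslope g a) := by
  rw [← differentiableOn_univ] at hg ⊢
  exact (Complex.differentiableOn_dslope (by simp)).2 hg

lemma circleIntegral_add' {f g : ℂ → ℂ} {c : ℂ} {R : ℝ}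
    (hf : CircleIntegrable f c R) (hg : CircleIntegrable g c R) :
    (∮ z in C(c, R), (f z + g z)) = (∮ z in C(c, R), f z) + ∮ z in C(c, R), g z := by
  simp only [circleIntegral, smul_add]
  exact intervalIntegral.integral_add hf.out hg.out

/-- Expanding-circles lemma: a function holomorphic outside a disc whose values decay
like `K / s ^ 2` has vanishing circle integral. -/
lemma circleIntegral_eq_zero_of_decay {f : ℂ → ℂ} {U : Set ℂ} (hU : IsOpen U) {c : ℂ} {r : ℝ}
    (hr : 0 < r) (hsub : ∀ t, r ≤ dist t c → t ∈ U) (hf : DifferentiableOn ℂ f U) {K : ℝ}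
    (hdec : ∀ᶠ s in atTop, ∀ t, dist t c = s → ‖f t‖ ≤ K / s ^ 2) :
    (∮ t in C(c, r), f t) = 0 := by
  have heq : ∀ s, r ≤ s → (∮ t in C(c, r), f t) = ∮ t in C(c, s), f t := by
    intro s hs
    refine (circleIntegral_eq_of_differentiable_on_annulus_off_countable hr hs
      Set.countable_empty ?_ ?_).symm
    · refine (hf.continuousOn).mono fun t ht => hsub t ?_
      have := ht.2
      simpa [Metric.mem_ball, not_lt] using this
    · intro t ht
      refine (hf.differentiableAt (hU.mem_nhds (hsub t ?_)))
      have := ht.1.2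
      simp only [Metric.mem_closedBall, not_le] at this
      exact this.le
  have hb : ∀ᶠ s in atTop, ‖∮ t in C(c, r), f t‖ ≤ 2 * Real.pi * K / s := by
    filter_upwards [hdec, eventually_ge_atTop r, eventually_gt_atTop (0 : ℝ)] with s h1 h2 h3
    rw [heq s h2]
    calc ‖∮ t in C(c, s), f t‖ ≤ 2 * Real.pi * s * (K / s ^ 2) := by
          refine circleIntegral.norm_integral_le_of_norm_le_const h3.le fun z hz => h1 z ?_
          exact Metric.mem_sphere.mp hz
      _ = 2 * Real.pi * K / s := by field_simp
  have h0 : Tendsto (fun s : ℝ => 2 * Real.pi * K / s) atTop (nhds 0) :=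
    tendsto_const_nhds.div_atTop tendsto_id
  have : ‖∮ t in C(c, r), f t‖ ≤ 0 := ge_of_tendsto h0 hb
  simpa using norm_le_zero_iff.mp this

/-- Circle integral of the reciprocal of a product of at least two linear factors, all of whose
roots lie inside the circle, vanishes. -/
lemma lemB {c : ℂ} {r : ℝ} (hr : 0 < r) (n : ℕ) (hn : 1 ≤ n) (μ : ℕ → ℂ)
    (hμ : ∀ k ≤ n, μ k ∈ Metric.ball c r) :
    (∮ t in C(c, r), (∏ k ∈ Finset.range (n + 1), (t - μ k))⁻¹) = 0 := by
  set U : Set ℂ := {t | ∀ k ≤ n, t ≠ μ k} with hUdef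
  have hU : IsOpen U := by
    have : U = ⋂ k ∈ Finset.range (n + 1), {t : ℂ | t ≠ μ k} := by
      ext t; simp [hUdef, Nat.lt_succ_iff]
    rw [this]
    exact isOpen_biInter_finset fun k _ => isOpen_ne
  have hsub : ∀ t, r ≤ dist t c → t ∈ U := by
    intro t ht k hk h
    subst h
    exact absurd (hμ k hk) (by simpa [Metric.mem_ball] using ht.not_gt)
  have hf : DifferentiableOn ℂ (fun t => (∏ k ∈ Finset.range (n + 1), (t - μ k))⁻¹) U := by
    intro t ht
    refine DifferentiableAt.differentiableWithinAt ?_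
    refine DifferentiableAt.inv ?_ ?_
    · exact DifferentiableAt.fun_finsetProd fun k _ => (differentiableAt_id.sub_const _)
    · exact Finset.prod_ne_zero_iff.2 fun k hk =>
        sub_ne_zero.2 (ht k (Nat.lt_succ_iff.mp (Finset.mem_range.mp hk)))
  refine MuntzAux.circleIntegral_eq_zero_of_decay hU hr hsub hf (K := 4) ?_
  filter_upwards [eventually_ge_atTop (2 * r + 2), eventually_gt_atTop (0 : ℝ)] with s hs hspos
  intro t ht
  have hsr : 1 ≤ s - r := by nlinarith [hr]
  have hsr2 : s / 2 ≤ s - r := by nlinarith [hr]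
  have hfactor : ∀ k ≤ n, s - r ≤ ‖t - μ k‖ := by
    intro k hk
    have h1 : dist (μ k) c < r := (hμ k hk)
    have : dist t c - dist (μ k) c ≤ dist t (μ k) := by
      have := dist_triangle t (μ k) c
      linarith [this]
    rw [ht] at this
    calc s - r ≤ dist t (μ k) := by linarith
      _ = ‖t - μ k‖ := by rw [Complex.dist_eq]
  have hprod : (s - r) ^ (n + 1) ≤ ‖∏ k ∈ Finset.range (n + 1), (t - μ k)‖ := by
    rw [norm_prod]
    calc (s - r) ^ (n + 1) = ∏ _k ∈ Finset.range (n + 1), (s - r) := by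
          rw [Finset.prod_const, Finset.card_range]
      _ ≤ ∏ k ∈ Finset.range (n + 1), ‖t - μ k‖ := by
          refine Finset.prod_le_prod (fun k _ => by linarith) fun k hk => ?_
          exact hfactor k (Nat.lt_succ_iff.mp (Finset.mem_range.mp hk))
  have hsq : (s / 2) ^ 2 ≤ (s - r) ^ (n + 1) := by
    calc (s / 2) ^ 2 ≤ (s - r) ^ 2 := by
          refine pow_le_pow_left₀ (by positivity) hsr2 2
      _ ≤ (s - r) ^ (n + 1) := by
          refine pow_le_pow_right₀ (by linarith) (by omega)
  have habs : ‖∏ k ∈ Finset.range (n + 1), (t - μ k)‖ ≠ 0 := by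
    nlinarith [hprod, hsq, sq_nonneg (s/2), hspos]
  rw [norm_inv]
  have h2 : s ^ 2 / 4 ≤ ‖∏ k ∈ Finset.range (n + 1), (t - μ k)‖ := by
    calc s ^ 2 / 4 = (s / 2) ^ 2 := by ring
      _ ≤ (s - r) ^ (n + 1) := hsq
      _ ≤ _ := hprod
  calc (‖∏ k ∈ Finset.range (n + 1), (t - μ k)‖)⁻¹
      ≤ (s ^ 2 / 4)⁻¹ := by
        refine inv_anti₀ (by positivity) h2
    _ = 4 / s ^ 2 := by rw [inv_div]

/-- Cauchy/residue formula with multiplicity: circle integral of `g t / ∏ (t - μ k)` equals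
`2πi` times the iterated divided difference of `g` at the `μ k`. -/
lemma lemA {c : ℂ} {r : ℝ} (hr : 0 < r) :
    ∀ (n : ℕ) (μ : ℕ → ℂ) (g : ℂ → ℂ), Differentiable ℂ g →
      (∀ k ≤ n, μ k ∈ Metric.ball c r) →
      (∮ t in C(c, r), g t * (∏ k ∈ Finset.range (n + 1), (t - μ k))⁻¹)
        = (2 * Real.pi * Complex.I) * MuntzAux.dd g μ n := by
  intro n
  induction n with
  | zero =>
    intro μ g hg hμ
    have h1 : (∮ t in C(c, r), g t * (∏ k ∈ Finset.range 1, (t - μ k))⁻¹)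
        = ∮ t in C(c, r), (t - μ 0)⁻¹ • g t := by
      refine circleIntegral.integral_congr hr.le fun t _ => ?_
      simp [Finset.prod_range_one, smul_eq_mul, mul_comm]
    rw [h1, (hg.diffContOnCl).circleIntegral_sub_inv_smul (hμ 0 le_rfl)]
    simp [MuntzAux.dd, smul_eq_mul]
  | succ m ih =>
    intro μ g hg hμ
    set g' : ℂ → ℂ := dslope g (μ 0) with hg'def
    have hg' : Differentiable ℂ g' := MuntzAux.Differentiable.dslope' hg (μ 0)
    set μ' : ℕ → ℂ := fun k => μ (k + 1) with hμ'def
    have hμ' : ∀ k ≤ m, μ' k ∈ Metric.ball c r := fun k hk => hμ (k + 1) (by omega)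
    set P : ℂ → ℂ := fun t => ∏ k ∈ Finset.range (m + 1), (t - μ' k) with hPdef
    have hprodsplit : ∀ t : ℂ, (∏ k ∈ Finset.range (m + 2), (t - μ k)) = P t * (t - μ 0) := by
      intro t
      rw [hPdef]
      exact Finset.prod_range_succ' (fun k => (t - μ k)) (m + 1)
    have hPne : ∀ t ∈ Metric.sphere c r, P t ≠ 0 := by
      intro t ht
      refine Finset.prod_ne_zero_iff.2 fun k hk => sub_ne_zero.2 ?_
      intro h
      subst h
      have := hμ' k (Nat.lt_succ_iff.mp (Finset.mem_range.mp hk))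
      rw [Metric.mem_sphere] at ht
      rw [Metric.mem_ball] at this
      exact absurd ht (by linarith)
    have hμ0ne : ∀ t ∈ Metric.sphere c r, t - μ 0 ≠ 0 := by
      intro t ht
      refine sub_ne_zero.2 fun h => ?_
      subst h
      have := hμ 0 (by omega)
      rw [Metric.mem_sphere] at ht
      rw [Metric.mem_ball] at this
      exact absurd ht (by linarith)
    have hsplit : (∮ t in C(c, r), g t * (∏ k ∈ Finset.range (m + 2), (t - μ k))⁻¹)
        = ∮ t in C(c, r),
            (g' t * (P t)⁻¹ + g (μ 0) * (∏ k ∈ Finset.range (m + 2), (t - μ k))⁻¹) := by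
      refine circleIntegral.integral_congr hr.le fun t ht => ?_
      have e1 : g t = g (μ 0) + (t - μ 0) * g' t := by
        have := sub_smul_dslope g (μ 0) t
        rw [smul_eq_mul] at this
        rw [hg'def]
        linear_combination -this
      rw [e1, hprodsplit t]
      have h1 := hPne t ht
      have h2 := hμ0ne t ht
      field_simp
      ring
    rw [hsplit]
    have hint1 : CircleIntegrable (fun t => g' t * (P t)⁻¹) c r := by
      refine ContinuousOn.circleIntegrable hr.le ?_
      refine ContinuousOn.mul (hg'.continuous.continuousOn) ?_
      refine ContinuousOn.inv₀ ?_ hPne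
      exact Continuous.continuousOn (continuous_finset_prod _ fun k _ => (continuous_id.sub continuous_const))
    have hint2 : CircleIntegrable
        (fun t => g (μ 0) * (∏ k ∈ Finset.range (m + 2), (t - μ k))⁻¹) c r := by
      refine ContinuousOn.circleIntegrable hr.le ?_
      refine ContinuousOn.mul continuousOn_const ?_
      refine ContinuousOn.inv₀ (Continuous.continuousOn (continuous_finset_prod _ fun k _ => (continuous_id.sub continuous_const))) ?_
      intro t ht
      rw [hprodsplit t]
      exact mul_ne_zero (hPne t ht) (hμ0ne t ht)
    rw [MuntzAux.circleIntegral_add' hint1 hint2]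
    rw [ih μ' g' hg' hμ']
    have hzero : (∮ t in C(c, r),
        g (μ 0) * (∏ k ∈ Finset.range (m + 2), (t - μ k))⁻¹) = 0 := by
      rw [circleIntegral.integral_const_mul]
      rw [lemB hr (m + 1) (by omega) μ (fun k hk => hμ k hk)]
      simp
    rw [hzero, add_zero]
    rfl

/-- Exterior Cauchy formula: if `f` is holomorphic outside a disc and decays like `K / s`,
and `w` lies strictly outside the circle, then `∮ f t / (t - w) = -2πi f w`. -/
lemma extCauchy {f : ℂ → ℂ} {U : Set ℂ} (hU : IsOpen U) {c w : ℂ} {r : ℝ} (hr : 0 < r)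
    (hsub : ∀ t, r ≤ dist t c → t ∈ U) (hf : DifferentiableOn ℂ f U) (hw : r < dist w c)
    {K : ℝ} (hdec : ∀ᶠ s in atTop, ∀ t, dist t c = s → ‖f t‖ ≤ K / s) :
    (∮ t in C(c, r), f t / (t - w)) = -(2 * Real.pi * Complex.I) * f w := by
  have hwU : U ∈ nhds w := hU.mem_nhds (hsub w hw.le)
  have hds : DifferentiableOn ℂ (dslope f w) U := (Complex.differentiableOn_dslope hwU).2 hf
  have hUsph : ∀ t ∈ Metric.sphere c r, t ∈ U := fun t ht =>
    hsub t (by rw [Metric.mem_sphere] at ht; exact ht.ge)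
  have hne_w : ∀ t ∈ Metric.sphere c r, t ≠ w := by
    intro t ht h
    rw [Metric.mem_sphere] at ht
    rw [h] at ht
    exact absurd ht (by linarith)
  -- step 2 : rewrite the integral using dslope
  have hint_ds : CircleIntegrable (dslope f w) c r :=
    ContinuousOn.circleIntegrable hr.le ((hds.continuousOn).mono hUsph)
  have hint_inv : CircleIntegrable (fun t => f w * (t - w)⁻¹) c r := by
    refine ContinuousOn.circleIntegrable hr.le ?_
    exact continuousOn_const.mul (ContinuousOn.inv₀
      ((continuous_id.sub continuous_const).continuousOn)
      fun t ht => sub_ne_zero.2 (hne_w t ht))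
  have hzero1 : (∮ t in C(c, r), (t - w)⁻¹) = 0 := by
    refine Complex.circleIntegral_eq_zero_of_differentiable_on_off_countable hr.le
      Set.countable_empty ?_ ?_
    · refine ContinuousOn.inv₀ ((continuous_id.sub continuous_const).continuousOn) ?_
      intro t ht
      rw [Metric.mem_closedBall] at ht
      exact sub_ne_zero.2 fun h => absurd ht (by rw [h]; linarith)
    · intro t ht
      refine DifferentiableAt.inv (differentiableAt_id.sub_const _) ?_
      have := ht.1
      rw [Metric.mem_ball] at this
      exact sub_ne_zero.2 fun h => absurd this (by rw [h]; linarith)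
  have h2 : (∮ t in C(c, r), f t / (t - w)) = ∮ t in C(c, r), dslope f w t := by
    have : (∮ t in C(c, r), f t / (t - w))
        = ∮ t in C(c, r), (dslope f w t + f w * (t - w)⁻¹) := by
      refine circleIntegral.integral_congr hr.le fun t ht => ?_
      have htw := sub_ne_zero.2 (hne_w t ht)
      rw [dslope_of_ne f (hne_w t ht), slope_def_field]
      field_simp
      ring
    rw [this, MuntzAux.circleIntegral_add' hint_ds hint_inv,
      circleIntegral.integral_const_mul, hzero1, mul_zero, add_zero]
  -- step 3 : the auxiliary function G has vanishing integral
  set G : ℂ → ℂ := fun t => dslope f w t + f w * (t - c)⁻¹ with hGdef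
  have hGzero : (∮ t in C(c, r), G t) = 0 := by
    have hd0 : (0:ℝ) ≤ dist w c := dist_nonneg
    refine MuntzAux.circleIntegral_eq_zero_of_decay (U := U \ {c}) (hU.sdiff isClosed_singleton)
      hr (fun t ht => ⟨hsub t ht, by
        simp only [Set.mem_singleton_iff]
        intro h
        rw [h, dist_self] at ht
        linarith⟩) ?_ (K := 2 * (K + ‖f w‖ * dist c w)) ?_
    · refine DifferentiableOn.add (hds.mono Set.diff_subset) ?_
      intro t ht
      refine DifferentiableAt.differentiableWithinAt ?_
      exact differentiableAt_const _ |>.mul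
        ((differentiableAt_id.sub_const _).inv (sub_ne_zero.2 ht.2))
    · filter_upwards [hdec, eventually_ge_atTop (2 * dist w c + 1), eventually_gt_atTop (0 : ℝ)]
        with s h1 h2 h3
      intro t ht
      have htw_ne : t ≠ w := by
        intro h
        rw [h] at ht
        linarith
      have htc_ne : t ≠ c := by
        intro h
        rw [h, dist_self] at ht
        linarith
      have hGt : G t = (f t * (t - c) + f w * (c - w)) / ((t - w) * (t - c)) := by
        rw [hGdef]
        simp only []
        rw [dslope_of_ne f htw_ne, slope_def_field]
        have h4 : t - w ≠ 0 := sub_ne_zero.2 htw_ne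
        have h5 : t - c ≠ 0 := sub_ne_zero.2 htc_ne
        field_simp
        ring
      have hdist_tw : s - dist w c ≤ dist t w := by
        have h := dist_triangle t w c
        rw [ht] at h
        linarith
      have hs2 : s / 2 ≤ s - dist w c := by linarith
      have hnum : ‖f t * (t - c) + f w * (c - w)‖ ≤ K + ‖f w‖ * dist c w := by
        calc ‖f t * (t - c) + f w * (c - w)‖
            ≤ ‖f t * (t - c)‖ + ‖f w * (c - w)‖ := norm_add_le _ _
          _ = ‖f t‖ * dist t c + ‖f w‖ * dist c w := by
              rw [norm_mul, norm_mul, dist_eq_norm, dist_eq_norm]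
          _ ≤ (K / s) * s + ‖f w‖ * dist c w := by
              rw [ht]
              have := h1 t ht
              nlinarith [norm_nonneg (f t)]
          _ = K + ‖f w‖ * dist c w := by field_simp
      have hden : (s / 2) * s ≤ ‖(t - w) * (t - c)‖ := by
        rw [norm_mul, ← dist_eq_norm, ← dist_eq_norm, ht]
        have h6 : s / 2 ≤ dist t w := le_trans hs2 hdist_tw
        nlinarith [dist_nonneg (x := t) (y := w)]
      rw [hGt, norm_div]
      calc ‖f t * (t - c) + f w * (c - w)‖ / ‖(t - w) * (t - c)‖
          ≤ (K + ‖f w‖ * dist c w) / ((s / 2) * s) := by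
            refine div_le_div₀ ?_ hnum (by positivity) hden
            have h7 : (0:ℝ) ≤ ‖f t * (t - c) + f w * (c - w)‖ := norm_nonneg _
            linarith [le_trans h7 hnum]
        _ = 2 * (K + ‖f w‖ * dist c w) / s ^ 2 := by field_simp
  -- step 4 : combine
  have hc_ball : c ∈ Metric.ball c r := by simp [hr]
  have hint_invc : CircleIntegrable (fun t => f w * (t - c)⁻¹) c r := by
    refine ContinuousOn.circleIntegrable hr.le ?_
    refine continuousOn_const.mul (ContinuousOn.inv₀
      ((continuous_id.sub continuous_const).continuousOn) fun t ht => sub_ne_zero.2 ?_)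
    intro h
    rw [Metric.mem_sphere, h] at ht
    simp at ht
    linarith
  have h5 : (∮ t in C(c, r), G t)
      = (∮ t in C(c, r), dslope f w t) + (2 * Real.pi * Complex.I) * f w := by
    rw [hGdef]
    rw [MuntzAux.circleIntegral_add' hint_ds hint_invc, circleIntegral.integral_const_mul,
      circleIntegral.integral_sub_inv_of_mem_ball hc_ball]
    ring
  rw [h2]
  have hfin : (∮ t in C(c, r), dslope f w t) = -((2 * Real.pi * Complex.I : ℂ) * f w) := by
    have h6 := hGzero
    rw [h5] at h6
    linear_combination h6
  rw [hfin]
  ring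

/-- `∫_0^1 x^s dx = 1/(s+1)` for `Re s > -1`. -/
lemma integral_Ioo_cpow {s : ℂ} (hs : -1 < s.re) :
    ∫ x in Set.Ioo (0:ℝ) 1, (x:ℂ) ^ s = 1 / (s + 1) := by
  have h1 : (∫ x in Set.Ioo (0:ℝ) 1, (x:ℂ) ^ s) = ∫ x in (0:ℝ)..1, (x:ℂ) ^ s := by
    rw [intervalIntegral.integral_of_le zero_le_one, MeasureTheory.integral_Ioc_eq_integral_Ioo]
  have h2 : Complex.betaIntegral (s + 1) 1 = ∫ x in (0:ℝ)..1, (x:ℂ) ^ s := by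
    unfold Complex.betaIntegral
    refine intervalIntegral.integral_congr fun x _ => ?_
    have : s + 1 - 1 = s := by ring
    rw [this]
    norm_num
  have hu : 0 < (s + 1).re := by
    simp only [Complex.add_re, Complex.one_re]
    linarith
  have hv : 0 < (1 : ℂ).re := by norm_num
  have hbeta := Complex.Gamma_mul_Gamma_eq_betaIntegral hu hv
  rw [Complex.Gamma_one, mul_one] at hbeta
  have hne : s + 1 ≠ 0 := by
    intro h
    rw [Complex.ext_iff] at h
    simp only [Complex.add_re, Complex.one_re, Complex.zero_re] at h
    linarith [h.1]
  have hadd : Complex.Gamma (s + 1 + 1) = (s + 1) * Complex.Gamma (s + 1) :=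
    Complex.Gamma_add_one (s + 1) hne
  rw [hadd] at hbeta
  have hGne : Complex.Gamma (s + 1) ≠ 0 := Complex.Gamma_ne_zero_of_re_pos hu
  have hkey : (1 : ℂ) = (s + 1) * Complex.betaIntegral (s + 1) 1 := by
    refine mul_left_cancel₀ hGne ?_
    rw [mul_one]
    calc Complex.Gamma (s + 1) = (s + 1) * Complex.Gamma (s + 1) *
          Complex.betaIntegral (s + 1) 1 := hbeta
      _ = Complex.Gamma (s + 1) * ((s + 1) * Complex.betaIntegral (s + 1) 1) := by ring
  have hfin : Complex.betaIntegral (s + 1) 1 = 1 / (s + 1) := by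
    rw [eq_div_iff hne]
    linear_combination -hkey
  rw [h1, ← h2, hfin]

end MuntzAux

set_option maxHeartbeats 2000000 in
theorem muntzLegendre_moment_closed_form
    (n : ℕ) (lam : ℕ → ℂ) (hre : ∀ k ≤ n, (lam k).re > -(1/2))
    (l : ℂ) (hl : ∀ k ≤ n, (l + lam k).re > -1) :
    (∫ x in Set.Ioo (0:ℝ) 1, muntzLegendre lam n x * (x : ℂ) ^ l)
        = - muntzW lam n (-l - 1) ∧
    (∫ x in Set.Ioo (0:ℝ) 1, muntzLegendre lam n x * (x : ℂ) ^ l)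
        = (∏ k ∈ Finset.range n, (l - (starRingEnd ℂ) (lam k)) / (1 + l + lam k)) *
            (1 / (1 + l + lam n)) := by
  -- The radius of the circle in the definition of `muntzLegendre`
  set R : ℝ := 1 + ∑ k ∈ Finset.range (n + 1), ‖lam k‖ with hRdef
  have hRge1 : 1 ≤ R := by
    rw [hRdef]
    have : (0:ℝ) ≤ ∑ k ∈ Finset.range (n + 1), ‖lam k‖ :=
      Finset.sum_nonneg fun k _ => norm_nonneg _
    linarith
  have hRpos : 0 < R := by linarith
  have habs_le : ∀ k ≤ n, ‖lam k‖ + 1 ≤ R := by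
    intro k hk
    have : ‖lam k‖ ≤ ∑ j ∈ Finset.range (n + 1), ‖lam j‖ :=
      Finset.single_le_sum (fun j _ => norm_nonneg _)
        (Finset.mem_range.mpr (by omega))
    rw [hRdef]; linarith
  have hlamR : ∀ k ≤ n, lam k ∈ Metric.ball (0:ℂ) R := by
    intro k hk
    rw [Metric.mem_ball, Complex.dist_eq, sub_zero]
    have := habs_le k hk
    linarith
  -- the minimum of the real parts
  set α : ℝ := ((Finset.range (n + 1)).image fun k => (lam k).re).min'
    ((Finset.nonempty_range_iff.mpr (by omega)).image _) with hαdef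
  have hαle : ∀ k ≤ n, α ≤ (lam k).re := by
    intro k hk
    refine Finset.min'_le _ _ ?_
    exact Finset.mem_image_of_mem _ (Finset.mem_range.mpr (by omega))
  have hαmem : ∃ k ≤ n, (lam k).re = α := by
    have := Finset.min'_mem ((Finset.range (n + 1)).image fun k => (lam k).re)
      ((Finset.nonempty_range_iff.mpr (by omega)).image _)
    rw [Finset.mem_image] at this
    obtain ⟨k, hk, hke⟩ := this
    exact ⟨k, Nat.lt_succ_iff.mp (Finset.mem_range.mp hk), hke⟩
  have hα : -1 - l.re < α := by
    obtain ⟨k, hk, hke⟩ := hαmem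
    have := hl k hk
    rw [Complex.add_re] at this
    linarith
  set β : ℝ := (α + (-1 - l.re)) / 2 with hβdef
  have hβ1 : -1 - l.re < β := by rw [hβdef]; linarith
  have hβ2 : β < α := by rw [hβdef]; linarith
  have hβl : -1 < β + l.re := by linarith
  have hβlt : ∀ k ≤ n, β < (lam k).re := fun k hk => lt_of_lt_of_le hβ2 (hαle k hk)
  -- the second circle
  set ρ : ℝ := 1 + ∑ k ∈ Finset.range (n + 1),
    (‖lam k - (β:ℂ)‖)^2 / (2 * ((lam k).re - β)) with hρdef
  have hterm_nonneg : ∀ k ∈ Finset.range (n + 1),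
      (0:ℝ) ≤ (‖lam k - (β:ℂ)‖)^2 / (2 * ((lam k).re - β)) := by
    intro k hk
    have h0 := hβlt k (Nat.lt_succ_iff.mp (Finset.mem_range.mp hk))
    exact div_nonneg (by positivity) (by linarith)
  have hρpos : 0 < ρ := by
    rw [hρdef]
    have := Finset.sum_nonneg hterm_nonneg
    linarith
  set c₀ : ℂ := ((β + ρ : ℝ) : ℂ) with hc₀def
  have hball : ∀ k ≤ n, lam k ∈ Metric.ball c₀ ρ := by
    intro k hk
    have hpos := hβlt k hk
    have hterm : (‖lam k - (β:ℂ)‖)^2 / (2 * ((lam k).re - β)) < ρ := by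
      rw [hρdef]
      have h1 : (‖lam k - (β:ℂ)‖)^2 / (2 * ((lam k).re - β))
          ≤ ∑ j ∈ Finset.range (n + 1),
            (‖lam j - (β:ℂ)‖)^2 / (2 * ((lam j).re - β)) :=
        Finset.single_le_sum hterm_nonneg (Finset.mem_range.mpr (by omega))
      linarith
    rw [Metric.mem_ball, Complex.dist_eq]
    have hsq : (‖lam k - c₀‖)^2 < ρ^2 := by
      rw [Complex.sq_norm, Complex.normSq_apply]
      have hre : (lam k - c₀).re = (lam k).re - (β + ρ) := by
        simp [hc₀def, Complex.sub_re]
      have him : (lam k - c₀).im = (lam k).im := by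
        simp [hc₀def, Complex.sub_im]
      rw [hre, him]
      have habs2 : (‖lam k - (β:ℂ)‖)^2 = ((lam k).re - β)^2 + (lam k).im^2 := by
        rw [Complex.sq_norm, Complex.normSq_apply]
        simp [Complex.sub_re, Complex.sub_im]
        ring
      have h2 : ((lam k).re - β)^2 + (lam k).im^2 < 2 * ρ * ((lam k).re - β) := by
        have h3 := (div_lt_iff₀ (by linarith : (0:ℝ) < 2 * ((lam k).re - β))).mp hterm
        rw [habs2] at h3
        nlinarith
      nlinarith
    have h4 : ‖lam k - c₀‖ ≥ 0 := norm_nonneg _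
    nlinarith
  have hre_sphere : ∀ t ∈ Metric.sphere c₀ ρ, β ≤ t.re := by
    intro t ht
    rw [Metric.mem_sphere, Complex.dist_eq] at ht
    have h1 : (c₀ - t).re ≤ ‖c₀ - t‖ := Complex.re_le_norm _
    have h2 : ‖c₀ - t‖ = ρ := by
      rw [norm_sub_rev]
      exact ht
    have h3 : (c₀ - t).re = (β + ρ) - t.re := by simp [hc₀def, Complex.sub_re]
    rw [h3, h2] at h1
    linarith
  set w : ℂ := -l - 1 with hwdef
  have hwre : w.re = -1 - l.re := by simp [hwdef]; ring
  have hwout : ρ < dist w c₀ := by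
    have h1 : (c₀ - w).re ≤ ‖c₀ - w‖ := Complex.re_le_norm _
    have h2 : (c₀ - w).re = (β + ρ) - w.re := by simp [hc₀def, Complex.sub_re]
    have h3 : dist w c₀ = ‖c₀ - w‖ := by
      rw [dist_comm, Complex.dist_eq]
    rw [h3]
    rw [h2, hwre] at h1
    linarith
  -- the set where `muntzW lam n` is holomorphic
  set U : Set ℂ := {t | ∀ k ≤ n, t ≠ lam k} with hUdef
  have hUopen : IsOpen U := by
    have : U = ⋂ k ∈ Finset.range (n + 1), {t : ℂ | t ≠ lam k} := by
      ext t; simp [hUdef, Nat.lt_succ_iff]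
    rw [this]
    exact isOpen_biInter_finset fun k _ => isOpen_ne
  have hWdiff : DifferentiableOn ℂ (muntzW lam n) U := by
    intro t ht
    refine DifferentiableAt.differentiableWithinAt ?_
    have hne : ∀ k ≤ n, t - lam k ≠ 0 := fun k hk => sub_ne_zero.2 (ht k hk)
    refine DifferentiableAt.mul ?_ ?_
    · refine DifferentiableAt.fun_finsetProd fun k hk => ?_
      refine DifferentiableAt.div ?_ ?_ ?_
      · exact (differentiableAt_id.add_const _).add_const _
      · exact differentiableAt_id.sub_const _
      · exact hne k (le_of_lt (Finset.mem_range.mp hk))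
    · exact (differentiableAt_const _).div (differentiableAt_id.sub_const _) (hne n le_rfl)
  have hWsubρ : ∀ t, ρ ≤ dist t c₀ → t ∈ U := by
    intro t ht k hk h
    subst h
    exact absurd (hball k hk) (by simpa [Metric.mem_ball] using ht.not_gt)
  have hsphU : Metric.sphere c₀ ρ ⊆ U := fun t ht =>
    hWsubρ t (by rw [Metric.mem_sphere] at ht; exact ht.ge)
  -- decay of `muntzW` on large circles around `c₀`
  have hWdec : ∀ᶠ s in Filter.atTop, ∀ t, dist t c₀ = s →
      ‖muntzW lam n t‖ ≤ (2:ℝ)^(n+1) / s := by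
    filter_upwards [Filter.eventually_ge_atTop (2 * ‖c₀‖ + 6 * R),
      Filter.eventually_gt_atTop (0:ℝ)] with s hs hs0
    intro t ht
    have habs_t : s - ‖c₀‖ ≤ ‖t‖ := by
      have h2 : dist t c₀ ≤ dist t 0 + dist (0:ℂ) c₀ := dist_triangle t 0 c₀
      rw [ht] at h2
      have h3 : dist t 0 = ‖t‖ := by simp [Complex.dist_eq]
      have h4 : dist (0:ℂ) c₀ = ‖c₀‖ := by simp [Complex.dist_eq]
      rw [h3, h4] at h2
      linarith
    have hts : s / 2 + 3 * R ≤ ‖t‖ := by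
      have : s / 2 ≥ ‖c₀‖ + 3 * R := by linarith
      linarith
    have ht3R : 3 * R ≤ ‖t‖ := by
      have : (0:ℝ) < s := hs0
      linarith
    have htR : ‖t‖ - R ≥ s / 2 := by linarith
    have htRpos : (0:ℝ) < ‖t‖ - R := by linarith
    have hfac : ∀ k ≤ n, ‖(t + (starRingEnd ℂ) (lam k) + 1) / (t - lam k)‖ ≤ 2 := by
      intro k hk
      rw [norm_div]
      have hnum : ‖t + (starRingEnd ℂ) (lam k) + 1‖ ≤ ‖t‖ + R := by
        calc ‖t + (starRingEnd ℂ) (lam k) + 1‖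
            ≤ ‖t + (starRingEnd ℂ) (lam k)‖ + 1 := by
              simpa using norm_add_le (t + (starRingEnd ℂ) (lam k)) 1
          _ ≤ ‖t‖ + ‖lam k‖ + 1 := by
              have := norm_add_le t ((starRingEnd ℂ) (lam k))
              rw [Complex.norm_conj] at this
              linarith
          _ ≤ ‖t‖ + R := by have := habs_le k hk; linarith
      have hden : ‖t‖ - R ≤ ‖t - lam k‖ := by
        have h5 : ‖t‖ - ‖lam k‖ ≤ ‖t - lam k‖ := by
          simpa using norm_sub_norm_le t (lam k)
        have := habs_le k hk
        linarith
      calc ‖t + (starRingEnd ℂ) (lam k) + 1‖ / ‖t - lam k‖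
          ≤ (‖t‖ + R) / (‖t‖ - R) := by
            refine div_le_div₀ (by linarith [norm_nonneg t]) hnum htRpos hden
        _ ≤ 2 := by
          rw [div_le_iff₀ htRpos]
          linarith
    have hlast : ‖1 / (t - lam n)‖ ≤ 2 / s := by
      rw [norm_div, norm_one]
      have hden : ‖t‖ - R ≤ ‖t - lam n‖ := by
        have h5 : ‖t‖ - ‖lam n‖ ≤ ‖t - lam n‖ := by
          simpa using norm_sub_norm_le t (lam n)
        have := habs_le n le_rfl
        linarith
      rw [div_le_div_iff₀ (by linarith) (by positivity)]
      nlinarith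
    rw [muntzW, norm_mul]
    calc ‖∏ k ∈ Finset.range n, (t + (starRingEnd ℂ) (lam k) + 1) / (t - lam k)‖ *
          ‖1 / (t - lam n)‖
        ≤ (2:ℝ)^n * (2 / s) := by
          refine mul_le_mul ?_ hlast (norm_nonneg _) (by positivity)
          rw [norm_prod]
          calc ∏ k ∈ Finset.range n, ‖(t + (starRingEnd ℂ) (lam k) + 1) / (t - lam k)‖
              ≤ ∏ _k ∈ Finset.range n, (2:ℝ) := by
                refine Finset.prod_le_prod (fun k _ => norm_nonneg _) fun k hk => ?_
                exact hfac k (Finset.mem_range.mp hk).le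
            _ = (2:ℝ)^n := by rw [Finset.prod_const, Finset.card_range]
      _ = (2:ℝ)^(n+1) / s := by ring
  -- `muntzW` as a single quotient
  have hWq : ∀ t : ℂ, muntzW lam n t
      = (∏ k ∈ Finset.range n, (t + (starRingEnd ℂ) (lam k) + 1)) *
        (∏ k ∈ Finset.range (n + 1), (t - lam k))⁻¹ := by
    intro t
    rw [muntzW, Finset.prod_div_distrib, Finset.prod_range_succ, div_mul_div_comm, mul_one,
      div_eq_mul_inv]
  -- the entire numerator function, for a fixed `x`
  have hgdiff : ∀ L : ℂ, Differentiable ℂ (fun t =>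
      (∏ k ∈ Finset.range n, (t + (starRingEnd ℂ) (lam k) + 1)) * Complex.exp (t * L)) := by
    intro L
    refine Differentiable.mul ?_ ?_
    · exact Differentiable.fun_finsetProd fun k _ => (differentiable_id.add_const _).add_const _
    · exact Complex.differentiable_exp.comp (differentiable_id.mul_const _)
  -- representation of the Müntz-Legendre polynomial over the second circle
  have hLrep : ∀ x : ℝ, muntzLegendre lam n x = (2 * Real.pi * Complex.I)⁻¹ *
      ∮ t in C(c₀, ρ), muntzW lam n t * Complex.exp (t * (Real.log x : ℂ)) := by
    intro x
    have hfun : (fun t => muntzW lam n t * Complex.exp (t * (Real.log x : ℂ)))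
        = fun t => ((∏ k ∈ Finset.range n, (t + (starRingEnd ℂ) (lam k) + 1)) *
            Complex.exp (t * (Real.log x : ℂ))) *
          (∏ k ∈ Finset.range (n + 1), (t - lam k))⁻¹ := by
      funext t
      rw [hWq t]
      ring
    have h1 : (∮ t in C((0:ℂ), R), muntzW lam n t * Complex.exp (t * (Real.log x : ℂ)))
        = (2 * Real.pi * Complex.I) * MuntzAux.dd (fun t =>
            (∏ k ∈ Finset.range n, (t + (starRingEnd ℂ) (lam k) + 1)) *
            Complex.exp (t * (Real.log x : ℂ))) lam n := by
      rw [show (∮ t in C((0:ℂ), R), muntzW lam n t * Complex.exp (t * (Real.log x : ℂ)))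
          = ∮ t in C((0:ℂ), R), ((∏ k ∈ Finset.range n, (t + (starRingEnd ℂ) (lam k) + 1)) *
              Complex.exp (t * (Real.log x : ℂ))) *
            (∏ k ∈ Finset.range (n + 1), (t - lam k))⁻¹ from by rw [← hfun]]
      exact MuntzAux.lemA hRpos n lam _ (hgdiff _) hlamR
    have h2 : (∮ t in C(c₀, ρ), muntzW lam n t * Complex.exp (t * (Real.log x : ℂ)))
        = (2 * Real.pi * Complex.I) * MuntzAux.dd (fun t =>
            (∏ k ∈ Finset.range n, (t + (starRingEnd ℂ) (lam k) + 1)) *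
            Complex.exp (t * (Real.log x : ℂ))) lam n := by
      rw [show (∮ t in C(c₀, ρ), muntzW lam n t * Complex.exp (t * (Real.log x : ℂ)))
          = ∮ t in C(c₀, ρ), ((∏ k ∈ Finset.range n, (t + (starRingEnd ℂ) (lam k) + 1)) *
              Complex.exp (t * (Real.log x : ℂ))) *
            (∏ k ∈ Finset.range (n + 1), (t - lam k))⁻¹ from by rw [← hfun]]
      exact MuntzAux.lemA hρpos n lam _ (hgdiff _) hball
    rw [muntzLegendre, ← hRdef, h1, h2]
  -- setup for the Fubini argument
  have h2πpos : (0:ℝ) < 2 * Real.pi := by positivity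
  haveI hfinθ : IsFiniteMeasure (volume.restrict (Set.Ioc (0:ℝ) (2*Real.pi))) :=
    ⟨by rw [Measure.restrict_apply_univ]; exact measure_Ioc_lt_top⟩
  have hγcont : Continuous (circleMap c₀ ρ) := continuous_circleMap _ _
  have hγsph : ∀ θ : ℝ, circleMap c₀ ρ θ ∈ Metric.sphere c₀ ρ :=
    circleMap_mem_sphere c₀ hρpos.le
  have hWγcont : Continuous (fun θ : ℝ => muntzW lam n (circleMap c₀ ρ θ)) :=
    (hWdiff.continuousOn).comp_continuous hγcont fun θ => hsphU (hγsph θ)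
  have hAcont : Continuous (fun θ : ℝ =>
      deriv (circleMap c₀ ρ) θ * muntzW lam n (circleMap c₀ ρ θ)) := by
    simp only [deriv_circleMap]
    exact ((continuous_circleMap 0 ρ).mul continuous_const).mul hWγcont
  obtain ⟨CW, hCW⟩ := (isCompact_sphere c₀ ρ).exists_bound_of_continuousOn
    (hWdiff.continuousOn.mono hsphU)
  have hCW0 : 0 ≤ CW := le_trans (norm_nonneg _) (hCW (circleMap c₀ ρ 0) (hγsph 0))
  have hIoo : MeasurableSet (Set.Ioo (0:ℝ) 1) := measurableSet_Ioo
  -- pointwise bound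
  have hΦbound : ∀ x ∈ Set.Ioo (0:ℝ) 1, ∀ θ : ℝ,
      ‖deriv (circleMap c₀ ρ) θ * muntzW lam n (circleMap c₀ ρ θ) *
        Complex.exp ((circleMap c₀ ρ θ + l) * (Real.log x : ℂ))‖ ≤
      ρ * CW * x ^ (β + l.re) := by
    intro x hx θ
    have hL : Real.log x < 0 := Real.log_neg hx.1 hx.2
    have h1 : ‖deriv (circleMap c₀ ρ) θ‖ = ρ := by
      rw [deriv_circleMap, norm_mul,
        norm_circleMap_zero, Complex.norm_I, mul_one, abs_of_pos hρpos]
    have h2 : ‖muntzW lam n (circleMap c₀ ρ θ)‖ ≤ CW := hCW _ (hγsph θ)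
    have h3 : ‖Complex.exp ((circleMap c₀ ρ θ + l) * (Real.log x : ℂ))‖ ≤ x ^ (β + l.re) := by
      rw [Complex.norm_exp]
      have hre : ((circleMap c₀ ρ θ + l) * (Real.log x : ℂ)).re
          = ((circleMap c₀ ρ θ).re + l.re) * Real.log x := by
        simp [Complex.mul_re, Complex.add_re]
      rw [hre, Real.rpow_def_of_pos hx.1, Real.exp_le_exp]
      have hrs := hre_sphere _ (hγsph θ)
      nlinarith
    calc ‖deriv (circleMap c₀ ρ) θ * muntzW lam n (circleMap c₀ ρ θ) *
          Complex.exp ((circleMap c₀ ρ θ + l) * (Real.log x : ℂ))‖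
        = ‖deriv (circleMap c₀ ρ) θ‖ * ‖muntzW lam n (circleMap c₀ ρ θ)‖ *
          ‖Complex.exp ((circleMap c₀ ρ θ + l) * (Real.log x : ℂ))‖ := by
          rw [norm_mul, norm_mul]
      _ ≤ ρ * CW * x ^ (β + l.re) := by
          rw [h1]
          have hn3 : (0:ℝ) ≤ ‖Complex.exp ((circleMap c₀ ρ θ + l) * (Real.log x : ℂ))‖ :=
            norm_nonneg _
          exact mul_le_mul (mul_le_mul_of_nonneg_left h2 hρpos.le) h3 hn3
            (mul_nonneg hρpos.le hCW0)
  -- step 1 : the moment as a double integral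
  have hstep1 : (∫ x in Set.Ioo (0:ℝ) 1, muntzLegendre lam n x * (x:ℂ)^l)
      = (2*Real.pi*Complex.I)⁻¹ * ∫ x in Set.Ioo (0:ℝ) 1,
          ∫ θ in Set.Ioc (0:ℝ) (2*Real.pi),
            deriv (circleMap c₀ ρ) θ * muntzW lam n (circleMap c₀ ρ θ) *
              Complex.exp ((circleMap c₀ ρ θ + l) * (Real.log x : ℂ)) := by
    rw [← MeasureTheory.integral_const_mul]
    refine MeasureTheory.setIntegral_congr_fun hIoo fun x hx => ?_
    rw [hLrep x, mul_assoc]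
    congr 1
    rw [circleIntegral, intervalIntegral.integral_of_le h2πpos.le,
      ← MeasureTheory.integral_mul_const]
    refine MeasureTheory.setIntegral_congr_fun measurableSet_Ioc fun θ _ => ?_
    rw [smul_eq_mul]
    have hxne : (x:ℂ) ≠ 0 := by exact_mod_cast ne_of_gt hx.1
    rw [Complex.cpow_def_of_ne_zero hxne, ← Complex.ofReal_log hx.1.le]
    have hexp : Complex.exp (circleMap c₀ ρ θ * (Real.log x : ℂ)) *
        Complex.exp ((Real.log x : ℂ) * l)
        = Complex.exp ((circleMap c₀ ρ θ + l) * (Real.log x : ℂ)) := by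
      rw [← Complex.exp_add]
      congr 1
      ring
    calc deriv (circleMap c₀ ρ) θ * (muntzW lam n (circleMap c₀ ρ θ) *
          Complex.exp (circleMap c₀ ρ θ * (Real.log x : ℂ))) *
          Complex.exp ((Real.log x : ℂ) * l)
        = deriv (circleMap c₀ ρ) θ * muntzW lam n (circleMap c₀ ρ θ) *
          (Complex.exp (circleMap c₀ ρ θ * (Real.log x : ℂ)) *
            Complex.exp ((Real.log x : ℂ) * l)) := by ring
      _ = deriv (circleMap c₀ ρ) θ * muntzW lam n (circleMap c₀ ρ θ) *
          Complex.exp ((circleMap c₀ ρ θ + l) * (Real.log x : ℂ)) := by rw [hexp]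
  -- integrability on the product space
  have hInt : Integrable (Function.uncurry fun (x θ : ℝ) =>
      deriv (circleMap c₀ ρ) θ * muntzW lam n (circleMap c₀ ρ θ) *
        Complex.exp ((circleMap c₀ ρ θ + l) * (Real.log x : ℂ)))
      ((volume.restrict (Set.Ioo (0:ℝ) 1)).prod
        (volume.restrict (Set.Ioc (0:ℝ) (2*Real.pi)))) := by
    have hSmeas : MeasurableSet (Set.Ioo (0:ℝ) 1 ×ˢ Set.Ioc (0:ℝ) (2*Real.pi)) :=
      hIoo.prod measurableSet_Ioc
    have hcontΦ : ContinuousOn (Function.uncurry fun (x θ : ℝ) =>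
        deriv (circleMap c₀ ρ) θ * muntzW lam n (circleMap c₀ ρ θ) *
          Complex.exp ((circleMap c₀ ρ θ + l) * (Real.log x : ℂ)))
        (Set.Ioo (0:ℝ) 1 ×ˢ Set.Ioc (0:ℝ) (2*Real.pi)) := by
      intro p hp
      have hx0 : p.1 ≠ 0 := ne_of_gt hp.1.1
      refine ContinuousAt.continuousWithinAt ?_
      refine ContinuousAt.mul ?_ ?_
      · exact (hAcont.comp continuous_snd).continuousAt
      · refine Complex.continuous_exp.continuousAt.comp ?_
        refine ContinuousAt.mul ?_ ?_
        · exact (((hγcont.comp continuous_snd).add continuous_const)).continuousAt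
        · exact Complex.continuous_ofReal.continuousAt.comp
            ((Real.continuousAt_log hx0).comp continuous_fst.continuousAt)
    have hmeas : AEStronglyMeasurable (Function.uncurry fun (x θ : ℝ) =>
        deriv (circleMap c₀ ρ) θ * muntzW lam n (circleMap c₀ ρ θ) *
          Complex.exp ((circleMap c₀ ρ θ + l) * (Real.log x : ℂ)))
        ((volume.restrict (Set.Ioo (0:ℝ) 1)).prod
          (volume.restrict (Set.Ioc (0:ℝ) (2*Real.pi)))) := by
      rw [Measure.prod_restrict]
      exact hcontΦ.aestronglyMeasurable hSmeas
    refine (MeasureTheory.integrable_prod_iff hmeas).2 ⟨?_, ?_⟩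
    · refine (MeasureTheory.ae_restrict_iff' hIoo).2 (Filter.Eventually.of_forall fun x hx => ?_)
      have hc : Continuous fun θ : ℝ =>
          deriv (circleMap c₀ ρ) θ * muntzW lam n (circleMap c₀ ρ θ) *
            Complex.exp ((circleMap c₀ ρ θ + l) * (Real.log x : ℂ)) := by
        refine hAcont.mul ?_
        exact Complex.continuous_exp.comp ((hγcont.add continuous_const).mul continuous_const)
      exact hc.integrableOn_Ioc
    · have hmeas2 := hmeas.norm.integral_prod_right'
      refine MeasureTheory.Integrable.mono'
        (g := fun x : ℝ => ρ * CW * x ^ (β + l.re) * (2*Real.pi)) ?_ hmeas2 ?_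
      · have hrint : IntegrableOn (fun x : ℝ => x ^ (β + l.re)) (Set.Ioc (0:ℝ) 1) := by
          have := intervalIntegral.intervalIntegrable_rpow' (a := 0) (b := 1) hβl
          rwa [intervalIntegrable_iff_integrableOn_Ioc_of_le zero_le_one] at this
        have h1 : IntegrableOn (fun x : ℝ => x ^ (β + l.re)) (Set.Ioo (0:ℝ) 1) :=
          hrint.mono_set Set.Ioo_subset_Ioc_self
        have h2 := (h1.const_mul (ρ * CW)).mul_const (2*Real.pi)
        exact h2
      · refine (MeasureTheory.ae_restrict_iff' hIoo).2
          (Filter.Eventually.of_forall fun x hx => ?_)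
        have hb := hΦbound x hx
        calc ‖∫ θ, ‖deriv (circleMap c₀ ρ) θ * muntzW lam n (circleMap c₀ ρ θ) *
              Complex.exp ((circleMap c₀ ρ θ + l) * (Real.log x : ℂ))‖
              ∂(volume.restrict (Set.Ioc (0:ℝ) (2*Real.pi)))‖
            ≤ (ρ * CW * x ^ (β + l.re)) *
              ((volume.restrict (Set.Ioc (0:ℝ) (2*Real.pi))) Set.univ).toReal := by
              refine MeasureTheory.norm_integral_le_of_norm_le_const ?_
              exact Filter.Eventually.of_forall fun θ => by rw [norm_norm]; exact hb θ
          _ = ρ * CW * x ^ (β + l.re) * (2*Real.pi) := by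
              rw [Measure.restrict_apply_univ, Real.volume_Ioc]
              rw [ENNReal.toReal_ofReal (by linarith)]
              ring
  -- step 2 : swap the integrals
  have hswap := MeasureTheory.integral_integral_swap
    (f := fun (x θ : ℝ) =>
      deriv (circleMap c₀ ρ) θ * muntzW lam n (circleMap c₀ ρ θ) *
        Complex.exp ((circleMap c₀ ρ θ + l) * (Real.log x : ℂ)))
    (μ := volume.restrict (Set.Ioo (0:ℝ) 1))
    (ν := volume.restrict (Set.Ioc (0:ℝ) (2*Real.pi))) hInt
  -- step 3 : the inner integral
  have hinner : ∀ θ : ℝ, (∫ x in Set.Ioo (0:ℝ) 1,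
      deriv (circleMap c₀ ρ) θ * muntzW lam n (circleMap c₀ ρ θ) *
        Complex.exp ((circleMap c₀ ρ θ + l) * (Real.log x : ℂ)))
      = deriv (circleMap c₀ ρ) θ •
        (muntzW lam n (circleMap c₀ ρ θ) / (circleMap c₀ ρ θ - w)) := by
    intro θ
    have hsre : -1 < (circleMap c₀ ρ θ + l).re := by
      rw [Complex.add_re]
      have := hre_sphere _ (hγsph θ)
      linarith
    rw [MeasureTheory.integral_const_mul]
    have h2 : (∫ x in Set.Ioo (0:ℝ) 1,
        Complex.exp ((circleMap c₀ ρ θ + l) * (Real.log x : ℂ)))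
        = 1 / ((circleMap c₀ ρ θ + l) + 1) := by
      rw [show (∫ x in Set.Ioo (0:ℝ) 1,
            Complex.exp ((circleMap c₀ ρ θ + l) * (Real.log x : ℂ)))
          = ∫ x in Set.Ioo (0:ℝ) 1, (x:ℂ) ^ (circleMap c₀ ρ θ + l) from
        MeasureTheory.setIntegral_congr_fun hIoo fun x hx => by
          rw [Complex.cpow_def_of_ne_zero (by exact_mod_cast ne_of_gt hx.1),
            ← Complex.ofReal_log hx.1.le, mul_comm]]
      exact MuntzAux.integral_Ioo_cpow hsre
    rw [h2, smul_eq_mul,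
      show circleMap c₀ ρ θ - w = circleMap c₀ ρ θ + l + 1 from by rw [hwdef]; ring]
    ring
  -- step 4 : the outer integral is the circle integral, evaluated by the exterior Cauchy formula
  have houter : (∫ θ in Set.Ioc (0:ℝ) (2*Real.pi),
      deriv (circleMap c₀ ρ) θ •
        (muntzW lam n (circleMap c₀ ρ θ) / (circleMap c₀ ρ θ - w)))
      = ∮ t in C(c₀, ρ), muntzW lam n t / (t - w) := by
    rw [circleIntegral, intervalIntegral.integral_of_le h2πpos.le]
  have hext : (∮ t in C(c₀, ρ), muntzW lam n t / (t - w))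
      = -(2*Real.pi*Complex.I) * muntzW lam n w :=
    MuntzAux.extCauchy hUopen hρpos hWsubρ hWdiff hwout hWdec
  -- combine everything
  have h2πne : (2*Real.pi*Complex.I : ℂ) ≠ 0 := by
    simp [Real.pi_ne_zero, Complex.I_ne_zero]
  have hkey : (∫ x in Set.Ioo (0:ℝ) 1, muntzLegendre lam n x * (x:ℂ)^l)
      = - muntzW lam n w := by
    rw [hstep1, hswap]
    rw [MeasureTheory.setIntegral_congr_fun measurableSet_Ioc fun θ _ => hinner θ]
    rw [houter, hext]
    field_simp
  refine ⟨hkey, ?_⟩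
  rw [hkey]
  -- the algebraic identity
  rw [muntzW]
  rw [Finset.prod_congr rfl (fun k _ => show (w + (starRingEnd ℂ) (lam k) + 1) / (w - lam k)
      = (l - (starRingEnd ℂ) (lam k)) / (1 + l + lam k) from by
    rw [show w + (starRingEnd ℂ) (lam k) + 1 = -(l - (starRingEnd ℂ) (lam k)) from by
        rw [hwdef]; ring,
      show w - lam k = -(1 + l + lam k) from by rw [hwdef]; ring, neg_div_neg_eq])]
  rw [show (1:ℂ) / (w - lam n) = -(1 / (1 + l + lam n)) from by
    rw [show w - lam n = -(1 + l + lam n) from by rw [hwdef]; ring, div_neg]]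
  ring
end

section
/- Let λ_0, …, λ_N be complex numbers with Re(λ_k) > −1/2 for all k (repetitions allowed), and let L_n be the associated Müntz–Legendre polynomials, each differentiable on (0,1]. Then for every 1 ≤ n ≤ N and every x ∈ (0,1]: x·L_n′(x) − x·L_{n−1}′(x) = λ_n·L_n(x) + (1 + conj(λ_{n−1}))·L_{n−1}(x). -/
open MeasureTheory Complex

/-! ### Auxiliary lemmas -/

/-- The radius used in `muntzLegendre`. -/
noncomputable def mR (lam : ℕ → ℂ) (n : ℕ) : ℝ :=
  1 + ∑ k ∈ Finset.range (n + 1), ‖lam k‖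

lemma mR_pos (lam : ℕ → ℂ) (n : ℕ) : 0 < mR lam n := by
  have : (0:ℝ) ≤ ∑ k ∈ Finset.range (n+1), ‖lam k‖ :=
    Finset.sum_nonneg fun k _ => norm_nonneg _
  unfold mR; linarith

lemma abs_lam_lt (lam : ℕ → ℂ) {k n : ℕ} (h : k ≤ n) : ‖lam k‖ < mR lam n := by
  have h1 : ‖lam k‖ ≤ ∑ j ∈ Finset.range (n+1), ‖lam j‖ :=
    Finset.single_le_sum (f := fun j => ‖lam j‖)
      (fun j _ => norm_nonneg _) (Finset.mem_range.mpr (Nat.lt_succ_of_le h))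
  unfold mR; linarith

lemma mR_mono (lam : ℕ → ℂ) {m n : ℕ} (h : m ≤ n) : mR lam m ≤ mR lam n := by
  unfold mR
  have := Finset.sum_le_sum_of_subset_of_nonneg
    (Finset.range_subset_range.mpr (by omega : m + 1 ≤ n + 1))
    (fun j _ _ => norm_nonneg (lam j))
  linarith

lemma muntzW_diffAt (lam : ℕ → ℂ) (n : ℕ) {t : ℂ} (h : ∀ k ≤ n, t ≠ lam k) :
    DifferentiableAt ℂ (muntzW lam n) t := by
  unfold muntzW
  apply DifferentiableAt.mul
  · apply DifferentiableAt.fun_finsetProd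
    intro k hk
    exact ((differentiableAt_id.add_const _).add_const _).div (differentiableAt_id.sub_const _)
      (sub_ne_zero.mpr (h k (Nat.le_of_lt_succ (Nat.lt_succ_of_lt (Finset.mem_range.mp hk)))))
  · exact (differentiableAt_const 1).div (differentiableAt_id.sub_const _)
      (sub_ne_zero.mpr (h n le_rfl))

lemma circleMap_ne (lam : ℕ → ℂ) {k n : ℕ} (h : k ≤ n) (θ : ℝ) :
    circleMap 0 (mR lam n) θ ≠ lam k := by
  intro hEq
  have h1 : ‖circleMap 0 (mR lam n) θ‖ = mR lam n := by
    rw [norm_circleMap_zero, abs_of_pos (mR_pos lam n)]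
  rw [hEq] at h1
  exact absurd h1 (ne_of_lt (abs_lam_lt lam h))

lemma continuous_W_circle (lam : ℕ → ℂ) (n : ℕ) :
    Continuous (fun θ : ℝ => muntzW lam n (circleMap 0 (mR lam n) θ)) := by
  rw [continuous_iff_continuousAt]
  intro θ
  exact (muntzW_diffAt lam n (fun k hk => circleMap_ne lam hk θ)).continuousAt.comp
    (continuous_circleMap 0 (mR lam n)).continuousAt

/-- Differentiation under the integral sign for the parametrized circle integrals. -/
lemma hasDerivAt_param (g : ℝ → ℂ) (hg : Continuous g) (R : ℝ) {x : ℝ} (hx : 0 < x) :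
    HasDerivAt
      (fun y : ℝ => ∫ θ in (0:ℝ)..(2 * Real.pi),
        g θ * Complex.exp (circleMap 0 R θ * Real.log y))
      (∫ θ in (0:ℝ)..(2 * Real.pi),
        g θ * (circleMap 0 R θ * ((x:ℂ))⁻¹ * Complex.exp (circleMap 0 R θ * Real.log x))) x := by
  obtain ⟨K, hK0, hK⟩ : ∃ K, 0 ≤ K ∧ ∀ θ : ℝ, θ ∈ Set.uIcc (0:ℝ) (2*Real.pi) → ‖g θ‖ ≤ K := by
    obtain ⟨K, hK⟩ := (isCompact_uIcc (a := (0:ℝ)) (b := 2*Real.pi)).exists_bound_of_continuousOn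
      hg.continuousOn
    exact ⟨max K 0, le_max_right _ _, fun θ hθ => le_trans (hK θ hθ) (le_max_left _ _)⟩
  set M : ℝ := |Real.log (x/2)| + |Real.log (2*x)| with hM
  have hM0 : 0 ≤ M := by positivity
  have hlog : ∀ y : ℝ, y ∈ Metric.ball x (x/2) → |Real.log y| ≤ M := by
    intro y hy
    rw [Metric.mem_ball, Real.dist_eq, abs_lt] at hy
    have hy1 : x/2 ≤ y := by linarith
    have hy2 : y ≤ 2*x := by linarith
    have l1 : Real.log (x/2) ≤ Real.log y := Real.log_le_log (half_pos hx) hy1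
    have l2 : Real.log y ≤ Real.log (2*x) := Real.log_le_log (by linarith) hy2
    have a1 := neg_abs_le (Real.log (x/2))
    have a2 := le_abs_self (Real.log (2*x))
    have a3 := abs_nonneg (Real.log (2*x))
    have a4 := abs_nonneg (Real.log (x/2))
    rw [abs_le]
    constructor
    · simp only [hM]; linarith
    · simp only [hM]; linarith
  have hcont : ∀ y : ℝ, Continuous (fun θ : ℝ =>
      g θ * Complex.exp (circleMap 0 R θ * Real.log y)) := fun y =>
    hg.mul (((continuous_circleMap 0 R).mul continuous_const).cexp)
  have hcont' : Continuous (fun θ : ℝ =>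
      g θ * (circleMap 0 R θ * ((x:ℂ))⁻¹ * Complex.exp (circleMap 0 R θ * Real.log x))) :=
    hg.mul (((continuous_circleMap 0 R).mul continuous_const).mul
      (((continuous_circleMap 0 R).mul continuous_const).cexp))
  refine (intervalIntegral.hasDerivAt_integral_of_dominated_loc_of_deriv_le
    (F := fun y θ => g θ * Complex.exp (circleMap 0 R θ * Real.log y))
    (F' := fun y θ => g θ * (circleMap 0 R θ * ((y:ℂ))⁻¹ *
      Complex.exp (circleMap 0 R θ * Real.log y)))
    (bound := fun _ => K * (|R| * (2/x) * Real.exp (|R| * M)))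
    (Metric.ball_mem_nhds x (half_pos hx)) ?_ ?_ ?_ ?_ ?_ ?_).2
  · exact Filter.Eventually.of_forall fun y => (hcont y).aestronglyMeasurable
  · exact (hcont x).intervalIntegrable _ _
  · exact hcont'.aestronglyMeasurable
  · refine Filter.Eventually.of_forall fun θ hθ y hy => ?_
    have hy0 : 0 < y := by
      rw [Metric.mem_ball, Real.dist_eq, abs_lt] at hy; linarith
    have hyx : x/2 ≤ y := by
      rw [Metric.mem_ball, Real.dist_eq, abs_lt] at hy; linarith
    have hgθ : ‖g θ‖ ≤ K := hK θ (Set.uIoc_subset_uIcc hθ)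
    have e1 : ‖Complex.exp (circleMap 0 R θ * Real.log y)‖ ≤ Real.exp (|R| * M) := by
      rw [Complex.norm_exp]
      apply Real.exp_le_exp.mpr
      have hre : (circleMap 0 R θ * ((Real.log y : ℝ) : ℂ)).re
          = (circleMap 0 R θ).re * Real.log y := by
        simp [Complex.mul_re]
      rw [hre]
      calc (circleMap 0 R θ).re * Real.log y ≤ |(circleMap 0 R θ).re * Real.log y| :=
            le_abs_self _
        _ = |(circleMap 0 R θ).re| * |Real.log y| := abs_mul _ _
        _ ≤ |R| * M := by
            apply mul_le_mul _ (hlog y hy) (abs_nonneg _) (abs_nonneg _)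
            calc |(circleMap 0 R θ).re| ≤ ‖circleMap 0 R θ‖ :=
                  Complex.abs_re_le_norm _
              _ = |R| := norm_circleMap_zero R θ
    have e2 : ‖circleMap 0 R θ * ((y:ℂ))⁻¹‖ ≤ |R| * (2/x) := by
      rw [norm_mul, norm_inv, Complex.norm_real, Real.norm_eq_abs,
        norm_circleMap_zero, abs_of_pos hy0]
      apply mul_le_mul_of_nonneg_left _ (abs_nonneg R)
      have : y⁻¹ ≤ (x/2)⁻¹ := by
        apply inv_anti₀ (half_pos hx) hyx
      rwa [inv_div] at this
    calc ‖g θ * (circleMap 0 R θ * ((y:ℂ))⁻¹ * Complex.exp (circleMap 0 R θ * Real.log y))‖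
        = ‖g θ‖ * (‖circleMap 0 R θ * ((y:ℂ))⁻¹‖ *
          ‖Complex.exp (circleMap 0 R θ * Real.log y)‖) := by rw [norm_mul, norm_mul]
      _ ≤ K * (|R| * (2/x) * Real.exp (|R| * M)) := by
          apply mul_le_mul hgθ _ (by positivity) hK0
          exact mul_le_mul e2 e1 (norm_nonneg _) (by positivity)
  · exact (continuous_const.intervalIntegrable _ _)
  · refine Filter.Eventually.of_forall fun θ _ y hy => ?_
    have hy0 : 0 < y := by
      rw [Metric.mem_ball, Real.dist_eq, abs_lt] at hy; linarith
    have h1 : HasDerivAt (fun y : ℝ => ((Real.log y : ℝ) : ℂ)) ((y⁻¹ : ℝ) : ℂ) y :=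
      (Real.hasDerivAt_log (ne_of_gt hy0)).ofReal_comp
    have h2 := ((h1.const_mul (circleMap 0 R θ)).cexp).const_mul (g θ)
    convert h2 using 1
    · rfl
    push_cast
    ring

lemma muntzLegendre_hasDerivAt (lam : ℕ → ℂ) (n : ℕ) {x : ℝ} (hx : 0 < x) :
    HasDerivAt (muntzLegendre lam n)
      ((2 * Real.pi * Complex.I)⁻¹ * (((x:ℂ))⁻¹ *
        ∮ t in C(0, mR lam n), muntzW lam n t * t * Complex.exp (t * Real.log x))) x := by
  set R := mR lam n with hR
  have hfun : muntzLegendre lam n = fun y : ℝ => (2 * Real.pi * Complex.I)⁻¹ *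
      ∫ θ in (0:ℝ)..(2 * Real.pi),
        (circleMap 0 R θ * Complex.I * muntzW lam n (circleMap 0 R θ)) *
          Complex.exp (circleMap 0 R θ * Real.log y) := by
    funext y
    simp only [muntzLegendre, circleIntegral, deriv_circleMap, smul_eq_mul, mul_assoc]
    rfl
  have hg : Continuous (fun θ : ℝ =>
      circleMap 0 R θ * Complex.I * muntzW lam n (circleMap 0 R θ)) :=
    ((continuous_circleMap 0 R).mul continuous_const).mul (continuous_W_circle lam n)
  have hder := (hasDerivAt_param _ hg R hx).const_mul ((2 * Real.pi * Complex.I)⁻¹ : ℂ)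
  rw [hfun]
  convert hder using 2
  · rfl
  unfold circleIntegral
  rw [← intervalIntegral.integral_const_mul]
  apply intervalIntegral.integral_congr
  intro θ _
  simp only [deriv_circleMap, smul_eq_mul]
  ring

lemma circleInt_radius (lam : ℕ → ℂ) (m : ℕ) (φ : ℂ → ℂ) (hφ : Differentiable ℂ φ) {R : ℝ}
    (hle : mR lam m ≤ R) :
    (∮ t in C(0, R), muntzW lam m t * φ t) = ∮ t in C(0, mR lam m), muntzW lam m t * φ t := by
  have hne : ∀ z : ℂ, mR lam m ≤ ‖z‖ → ∀ k ≤ m, z ≠ lam k := by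
    intro z hz k hk hEq
    rw [hEq] at hz
    exact absurd hz (not_le.mpr (abs_lam_lt lam hk))
  have hdiff : ∀ z : ℂ, mR lam m ≤ ‖z‖ →
      DifferentiableAt ℂ (fun t => muntzW lam m t * φ t) z := fun z hz =>
    (muntzW_diffAt lam m (hne z hz)).mul (hφ z)
  apply circleIntegral_eq_of_differentiable_on_annulus_off_countable (mR_pos lam m) hle
    Set.countable_empty
  · intro z hz
    have hz2 : mR lam m ≤ ‖z‖ := by
      have := hz.2
      simpa [Metric.mem_ball, Complex.dist_eq, not_lt] using this
    exact (hdiff z hz2).continuousAt.continuousWithinAt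
  · intro z hz
    have hz2 : mR lam m ≤ ‖z‖ := by
      have := hz.1.2
      simp only [Metric.mem_closedBall, Complex.dist_eq, sub_zero, not_le] at this
      exact this.le
    exact hdiff z hz2

lemma muntzW_rec (lam : ℕ → ℂ) (m : ℕ) {t : ℂ} (h0 : ∀ k ≤ m + 1, t ≠ lam k) :
    muntzW lam (m+1) t * t - muntzW lam m t * t
      = lam (m+1) * muntzW lam (m+1) t + (1 + (starRingEnd ℂ) (lam m)) * muntzW lam m t := by
  have hP : (∏ k ∈ Finset.range m, (t - lam k)) ≠ 0 :=
    Finset.prod_ne_zero_iff.mpr fun k hk => sub_ne_zero.mpr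
      (h0 k (by have := Finset.mem_range.mp hk; omega))
  have h1' : t - lam m ≠ 0 := sub_ne_zero.mpr (h0 m (by omega))
  have h2' : t - lam (m+1) ≠ 0 := sub_ne_zero.mpr (h0 (m+1) le_rfl)
  simp only [muntzW, Finset.prod_range_succ]
  field_simp
  ring

theorem muntzLegendre_deriv_recurrence
    (N : ℕ) (lam : ℕ → ℂ) (hre : ∀ k ≤ N, (lam k).re > -(1/2)) :
    (∀ m ≤ N, ∀ x ∈ Set.Ioc (0:ℝ) 1, DifferentiableAt ℝ (muntzLegendre lam m) x) ∧
    ∀ n, 1 ≤ n → n ≤ N → ∀ x ∈ Set.Ioc (0:ℝ) 1,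
      (x : ℂ) * deriv (muntzLegendre lam n) x
          - (x : ℂ) * deriv (muntzLegendre lam (n - 1)) x
        = lam n * muntzLegendre lam n x
          + (1 + (starRingEnd ℂ) (lam (n - 1))) * muntzLegendre lam (n - 1) x := by
  constructor
  · intro m _ x hx
    exact (muntzLegendre_hasDerivAt lam m hx.1).differentiableAt
  · intro n hn1 _ x hx
    obtain ⟨x0, _⟩ := hx
    obtain ⟨m, rfl⟩ : ∃ m, n = m + 1 := ⟨n - 1, by omega⟩
    simp only [Nat.add_sub_cancel]
    have hx0 : ((x:ℂ)) ≠ 0 := by exact_mod_cast ne_of_gt x0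
    have hφ1 : Differentiable ℂ (fun t : ℂ => t * Complex.exp (t * Real.log x)) :=
      differentiable_id.mul ((differentiable_id.mul (differentiable_const _)).cexp)
    have hRle := mR_mono lam (Nat.le_succ m)
    rw [(muntzLegendre_hasDerivAt lam (m+1) x0).deriv, (muntzLegendre_hasDerivAt lam m x0).deriv]
    have hB1 : muntzLegendre lam (m+1) x = (2 * Real.pi * Complex.I)⁻¹ *
        ∮ t in C(0, mR lam (m+1)), muntzW lam (m+1) t * Complex.exp (t * Real.log x) := rfl
    have hB0 : muntzLegendre lam m x = (2 * Real.pi * Complex.I)⁻¹ *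
        ∮ t in C(0, mR lam (m+1)), muntzW lam m t * Complex.exp (t * Real.log x) := by
      rw [muntzLegendre]
      congr 1
      exact (circleInt_radius lam m (fun t => Complex.exp (t * Real.log x))
        ((differentiable_id.mul (differentiable_const _)).cexp) hRle).symm
    have hA0 : (∮ t in C(0, mR lam m), muntzW lam m t * t * Complex.exp (t * Real.log x))
        = ∮ t in C(0, mR lam (m+1)), muntzW lam m t * t * Complex.exp (t * Real.log x) := by
      have h := circleInt_radius lam m (fun t => t * Complex.exp (t * Real.log x)) hφ1 hRle
      simp only [← mul_assoc] at h
      exact h.symm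
    rw [hB1, hB0, hA0]
    set R := mR lam (m+1) with hR
    set A1 := ∮ t in C(0, R), muntzW lam (m+1) t * t * Complex.exp (t * Real.log x) with hA1d
    set A0 := ∮ t in C(0, R), muntzW lam m t * t * Complex.exp (t * Real.log x) with hA0d
    set B1 := ∮ t in C(0, R), muntzW lam (m+1) t * Complex.exp (t * Real.log x) with hB1d
    set B0 := ∮ t in C(0, R), muntzW lam m t * Complex.exp (t * Real.log x) with hB0d
    have hc : Continuous (circleMap 0 R) := continuous_circleMap _ _
    have hce : Continuous (fun θ : ℝ => Complex.exp (circleMap 0 R θ * Real.log x)) :=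
      (hc.mul continuous_const).cexp
    have hcW1 : Continuous (fun θ : ℝ => muntzW lam (m+1) (circleMap 0 R θ)) :=
      continuous_W_circle lam (m+1)
    have hcW0 : Continuous (fun θ : ℝ => muntzW lam m (circleMap 0 R θ)) := by
      rw [continuous_iff_continuousAt]
      intro θ
      exact (muntzW_diffAt lam m (fun k hk =>
        circleMap_ne lam (Nat.le_succ_of_le hk) θ)).continuousAt.comp hc.continuousAt
    have key : A1 - A0 = lam (m+1) * B1 + (1 + (starRingEnd ℂ) (lam m)) * B0 := by
      rw [hA1d, hA0d, hB1d, hB0d]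
      simp only [circleIntegral, deriv_circleMap, smul_eq_mul]
      rw [← intervalIntegral.integral_sub
          (((hc.fun_mul continuous_const).fun_mul ((hcW1.fun_mul hc).fun_mul hce)).intervalIntegrable _ _)
          (((hc.fun_mul continuous_const).fun_mul ((hcW0.fun_mul hc).fun_mul hce)).intervalIntegrable _ _),
        ← intervalIntegral.integral_const_mul, ← intervalIntegral.integral_const_mul,
        ← intervalIntegral.integral_add
          ((continuous_const.fun_mul ((hc.fun_mul continuous_const).fun_mul
            (hcW1.fun_mul hce))).intervalIntegrable _ _)
          ((continuous_const.fun_mul ((hc.fun_mul continuous_const).fun_mul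
            (hcW0.fun_mul hce))).intervalIntegrable _ _)]
      apply intervalIntegral.integral_congr
      intro θ _
      have hrec := muntzW_rec lam m (t := circleMap 0 R θ)
        (fun k hk => circleMap_ne lam hk θ)
      linear_combination (circleMap 0 R θ * Complex.I *
        Complex.exp (circleMap 0 R θ * Real.log x)) * hrec
    have hxx : (x:ℂ) * ((x:ℂ))⁻¹ = 1 := mul_inv_cancel₀ hx0
    linear_combination ((x:ℂ) * ((x:ℂ))⁻¹ * (2 * Real.pi * Complex.I)⁻¹) * key +
      ((2 * Real.pi * Complex.I)⁻¹ * (lam (m+1) * B1 +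
        (1 + (starRingEnd ℂ) (lam m)) * B0)) * hxx
end
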